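/- Let α ∈ (1,2], β ∈ (0,1), ξ ∈ (0,1), and let f : [0,1] × ℝ × ℝ → ℝ be continuous with |f(t,u,v) − f(t,ū,v̄)| ≤ k(|u−ū| + |v−v̄|) for all t ∈ [0,1] and u, v, ū, v̄ ∈ ℝ, where k > 0. For continuous u, v, ū, v̄ : [0,1] → ℝ set F(s) = f(s, u(s), v(s)) and F̄(s) = f(s, ū(s), v̄(s)) and let N = max{ sup_{t∈[0,1]}|u(t)−ū(t)|, sup_{t∈[0,1]}|v(t)−v̄(t)| }. Then for every t ∈ [0,1]: (i) |(T₁F)(t) − (T₁F̄)(t)| ≤ 2·G*·k·N, and (ii) |(T₂F)(t) − (T₂F̄)(t)| ≤ 2k·((Γ(3−α)Γ(α−β+1) + Γ(2−β))/(Γ(3−α)Γ(α−β+1)))·N. -/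

import Mathlib

/-!
By the Lipschitz condition, `|F - F̄| ≤ k (|u - ū| + |v - v̄|) ≤ 2kN` pointwise on `[0,1]`, and both
operators are integrals of `F` against fixed kernels, so each difference is bounded by `2kN`
times the `L¹` norm of the kernel. For `T₁` the kernel is `G(t, ·)`, whose `L¹` norm is at most
`G*`; this needs the supremum defining `G*` to be finite, which follows from the bound
`|G(t,s)| ≤ 1/(Γ(α)(1-ξ)) + Γ(2-β)(1-s)^(α-β-1)/(Γ(α-β)(1-ξ))`, integrable since `α - β > 0`.
For `T₂` the local part contributes at most `t · 2kN ≤ 2kN` and the nonlocal part at most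
`Γ(2-β)/(Γ(3-α)Γ(α-β)) · 2kN/(α-β)`, and `Γ(α-β+1) = (α-β)Γ(α-β)` gives the constant.
-/

open Real MeasureTheory Set

/-- The Green function of the fractional boundary value problem. -/
noncomputable def G (α β ξ : ℝ) (t s : ℝ) : ℝ :=
  if s ≤ t then
    ((1 - ξ) * (t - s) ^ (α - 1) + ξ * (1 - s) ^ (α - 1)) / (Real.Gamma α * (1 - ξ))
      - Real.Gamma (2 - β) * (ξ + (1 - ξ) * t) * (1 - s) ^ (α - β - 1)
          / (Real.Gamma (α - β) * (1 - ξ))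
  else
    ξ * (1 - s) ^ (α - 1) / (Real.Gamma α * (1 - ξ))
      - Real.Gamma (2 - β) * (ξ + (1 - ξ) * t) * (1 - s) ^ (α - β - 1)
          / (Real.Gamma (α - β) * (1 - ξ))

/-- `G* = sup_{t ∈ [0,1]} ∫₀¹ |G(t,s)| ds`. -/
noncomputable def Gstar (α β ξ : ℝ) : ℝ :=
  ⨆ t : Set.Icc (0 : ℝ) 1, ∫ s in (0 : ℝ)..1, |G α β ξ (t : ℝ) s|

lemma intervalIntegrable_one_sub_rpow {p : ℝ} (hp : -1 < p) :
    IntervalIntegrable (fun s : ℝ => (1 - s) ^ p) volume 0 1 := by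
  simpa using
    ((intervalIntegral.intervalIntegrable_rpow' (a := 0) (b := 1) hp).comp_sub_left 1).symm

lemma integral_one_sub_rpow {p : ℝ} (hp : -1 < p) :
    ∫ s in (0 : ℝ)..1, (1 - s) ^ p = 1 / (p + 1) := by
  rw [intervalIntegral.integral_comp_sub_left (fun x => x ^ p) 1]
  simp [integral_rpow (Or.inl hp), zero_rpow (by linarith : p + 1 ≠ 0)]

lemma abs_integral_mul_sub_le {K F F' : ℝ → ℝ} {a b M : ℝ} (hab : a ≤ b)
    (hK : IntervalIntegrable K volume a b) (hF : ContinuousOn F (Icc a b))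
    (hF' : ContinuousOn F' (Icc a b)) (hM : ∀ s ∈ Icc a b, |F s - F' s| ≤ M) :
    |(∫ s in a..b, K s * F s) - ∫ s in a..b, K s * F' s| ≤ (∫ s in a..b, |K s|) * M := by
  rw [← uIcc_of_le hab] at hF hF'
  have hKF := hK.mul_continuousOn hF
  have hKF' := hK.mul_continuousOn hF'
  rw [← intervalIntegral.integral_sub hKF hKF', ← intervalIntegral.integral_mul_const]
  refine (intervalIntegral.abs_integral_le_integral_abs hab).trans ?_
  refine intervalIntegral.integral_mono_on hab (hKF.sub hKF').abs (hK.abs.mul_const M) ?_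
  intro s hs
  rw [← mul_sub, abs_mul]
  exact mul_le_mul_of_nonneg_left (hM s hs) (abs_nonneg _)

lemma continuousOn_superposition {X Y Z W : Type*} [TopologicalSpace X] [TopologicalSpace Y]
    [TopologicalSpace Z] [TopologicalSpace W] {f : X → Y → Z → W} {u : X → Y} {v : X → Z}
    {S : Set X} (hf : ContinuousOn (fun q : X × Y × Z => f q.1 q.2.1 q.2.2) (S ×ˢ univ))
    (hu : ContinuousOn u S) (hv : ContinuousOn v S) :
    ContinuousOn (fun s => f s (u s) (v s)) S :=
  hf.comp (continuousOn_id.prodMk (hu.prodMk hv)) fun _ hs => ⟨hs, mem_univ _⟩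

section Green

variable {α β ξ : ℝ}

lemma abs_G_le (hα : 1 ≤ α) (hβα : β < α) (hβ : β < 2) (hξ0 : 0 ≤ ξ) (hξ1 : ξ < 1)
    {t s : ℝ} (ht : t ∈ Icc (0 : ℝ) 1) (hs : s ∈ Icc (0 : ℝ) 1) :
    |G α β ξ t s| ≤ 1 / (Gamma α * (1 - ξ))
      + Gamma (2 - β) / (Gamma (α - β) * (1 - ξ)) * (1 - s) ^ (α - β - 1) := by
  obtain ⟨ht0, ht1⟩ := ht
  obtain ⟨hs0, hs1⟩ := hs
  set A := Gamma α * (1 - ξ)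
  set B := Gamma (2 - β) / (Gamma (α - β) * (1 - ξ)) * (1 - s) ^ (α - β - 1)
  have hA : 0 < A := mul_pos (Gamma_pos_of_pos (by linarith)) (by linarith)
  have hB : 0 ≤ B := by
    have := Gamma_pos_of_pos (by linarith : 0 < 2 - β)
    have := Gamma_pos_of_pos (by linarith : 0 < α - β)
    have := rpow_nonneg (by linarith : 0 ≤ 1 - s) (α - β - 1)
    have : 0 < 1 - ξ := by linarith
    positivity
  have hθ0 : 0 ≤ ξ + (1 - ξ) * t := by nlinarith
  have hθ1 : ξ + (1 - ξ) * t ≤ 1 := by nlinarith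
  have hsingular : Gamma (2 - β) * (ξ + (1 - ξ) * t) * (1 - s) ^ (α - β - 1)
      / (Gamma (α - β) * (1 - ξ)) = (ξ + (1 - ξ) * t) * B := by ring
  have hleading : ∀ x : ℝ, 0 ≤ x → x ≤ 1 → 0 ≤ x / A ∧ x / A ≤ 1 / A := fun x hx0 hx1 =>
    ⟨div_nonneg hx0 hA.le, div_le_div_of_nonneg_right hx1 hA.le⟩
  have hpow : ∀ x : ℝ, 0 ≤ x → x ≤ 1 → 0 ≤ x ^ (α - 1) ∧ x ^ (α - 1) ≤ 1 := fun x hx0 hx1 =>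
    ⟨rpow_nonneg hx0 _, rpow_le_one hx0 hx1 (by linarith)⟩
  obtain ⟨h1s0, h1s1⟩ := hpow (1 - s) (by linarith) (by linarith)
  have hb := mul_le_of_le_one_left hB hθ1
  have hb0 := mul_nonneg hθ0 hB
  unfold G
  rw [hsingular]
  split_ifs with hst
  · obtain ⟨hts0, hts1⟩ := hpow (t - s) (by linarith) (by linarith)
    obtain ⟨ha0, ha1⟩ := hleading ((1 - ξ) * (t - s) ^ (α - 1) + ξ * (1 - s) ^ (α - 1))
      (by positivity) (by nlinarith)
    exact abs_le.2 ⟨by linarith, by linarith⟩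
  · obtain ⟨ha0, ha1⟩ := hleading (ξ * (1 - s) ^ (α - 1)) (by positivity) (by nlinarith)
    exact abs_le.2 ⟨by linarith, by linarith⟩

lemma intervalIntegrable_G (hα : 1 ≤ α) (hβα : β < α) (hβ : β < 2) (hξ0 : 0 ≤ ξ) (hξ1 : ξ < 1)
    {t : ℝ} (ht : t ∈ Icc (0 : ℝ) 1) :
    IntervalIntegrable (fun s => G α β ξ t s) volume 0 1 := by
  have hdom : IntervalIntegrable (fun s : ℝ => 1 / (Gamma α * (1 - ξ))
      + Gamma (2 - β) / (Gamma (α - β) * (1 - ξ)) * (1 - s) ^ (α - β - 1)) volume 0 1 :=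
    intervalIntegrable_const.add
      ((intervalIntegrable_one_sub_rpow (by linarith)).const_mul _)
  have hmeas : Measurable (fun s => G α β ξ t s) := by
    unfold G
    exact Measurable.ite (measurableSet_le measurable_id measurable_const) (by fun_prop)
      (by fun_prop)
  refine hdom.mono_fun' hmeas.aestronglyMeasurable ?_
  rw [Filter.EventuallyLE, ae_restrict_iff' measurableSet_uIoc]
  refine Filter.Eventually.of_forall fun s hs => ?_
  rw [uIoc_of_le zero_le_one] at hs
  exact abs_G_le hα hβα hβ hξ0 hξ1 ht ⟨hs.1.le, hs.2⟩

lemma integral_abs_G_le (hα : 1 ≤ α) (hβα : β < α) (hβ : β < 2) (hξ0 : 0 ≤ ξ) (hξ1 : ξ < 1)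
    {t : ℝ} (ht : t ∈ Icc (0 : ℝ) 1) :
    ∫ s in (0 : ℝ)..1, |G α β ξ t s|
      ≤ 1 / (Gamma α * (1 - ξ)) + Gamma (2 - β) / (Gamma (α - β) * (1 - ξ)) * (1 / (α - β)) := by
  have hw := intervalIntegrable_one_sub_rpow (p := α - β - 1) (by linarith)
  calc ∫ s in (0 : ℝ)..1, |G α β ξ t s|
      ≤ ∫ s in (0 : ℝ)..1, (1 / (Gamma α * (1 - ξ))
          + Gamma (2 - β) / (Gamma (α - β) * (1 - ξ)) * (1 - s) ^ (α - β - 1)) :=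
        intervalIntegral.integral_mono_on zero_le_one
          (intervalIntegrable_G hα hβα hβ hξ0 hξ1 ht).abs
          (intervalIntegrable_const.add (hw.const_mul _))
          fun s hs => abs_G_le hα hβα hβ hξ0 hξ1 ht hs
    _ = _ := by
      rw [intervalIntegral.integral_add intervalIntegrable_const (hw.const_mul _),
        intervalIntegral.integral_const_mul, integral_one_sub_rpow (by linarith)]
      simp

lemma integral_abs_G_le_Gstar (hα : 1 ≤ α) (hβα : β < α) (hβ : β < 2) (hξ0 : 0 ≤ ξ)
    (hξ1 : ξ < 1) {t : ℝ} (ht : t ∈ Icc (0 : ℝ) 1) :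
    ∫ s in (0 : ℝ)..1, |G α β ξ t s| ≤ Gstar α β ξ :=
  le_ciSup ⟨_, forall_mem_range.2 fun t' => integral_abs_G_le hα hβα hβ hξ0 hξ1 t'.2⟩
    (⟨t, ht⟩ : Icc (0 : ℝ) 1)

end Green

noncomputable def T₁ (α β ξ : ℝ) (F : ℝ → ℝ) (t : ℝ) : ℝ :=
  ∫ s in (0 : ℝ)..1, G α β ξ t s * F s

noncomputable def T₂ (α β : ℝ) (F : ℝ → ℝ) (t : ℝ) : ℝ :=
  (∫ s in (0 : ℝ)..t, F s) - Gamma (2 - β) * t ^ (2 - α) / (Gamma (3 - α) * Gamma (α - β))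
    * ∫ s in (0 : ℝ)..1, (1 - s) ^ (α - β - 1) * F s

section Operators

variable {α β ξ M t : ℝ} {F F' : ℝ → ℝ}

lemma abs_T₁_sub_le (hα : 1 ≤ α) (hβα : β < α) (hβ : β < 2) (hξ0 : 0 ≤ ξ) (hξ1 : ξ < 1)
    (hF : ContinuousOn F (Icc 0 1)) (hF' : ContinuousOn F' (Icc 0 1))
    (hM : ∀ s ∈ Icc (0 : ℝ) 1, |F s - F' s| ≤ M) (ht : t ∈ Icc (0 : ℝ) 1) :
    |T₁ α β ξ F t - T₁ α β ξ F' t| ≤ Gstar α β ξ * M := by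
  have hM0 : 0 ≤ M := (abs_nonneg _).trans (hM 0 (left_mem_Icc.2 zero_le_one))
  calc |T₁ α β ξ F t - T₁ α β ξ F' t| ≤ (∫ s in (0 : ℝ)..1, |G α β ξ t s|) * M :=
        abs_integral_mul_sub_le zero_le_one (intervalIntegrable_G hα hβα hβ hξ0 hξ1 ht) hF hF' hM
    _ ≤ Gstar α β ξ * M :=
        mul_le_mul_of_nonneg_right (integral_abs_G_le_Gstar hα hβα hβ hξ0 hξ1 ht) hM0

lemma abs_T₂_sub_le (hα : α ≤ 2) (hβα : β < α)
    (hF : ContinuousOn F (Icc 0 1)) (hF' : ContinuousOn F' (Icc 0 1))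
    (hM : ∀ s ∈ Icc (0 : ℝ) 1, |F s - F' s| ≤ M) (ht : t ∈ Icc (0 : ℝ) 1) :
    |T₂ α β F t - T₂ α β F' t|
      ≤ (Gamma (3 - α) * Gamma (α - β + 1) + Gamma (2 - β))
          / (Gamma (3 - α) * Gamma (α - β + 1)) * M := by
  obtain ⟨ht0, ht1⟩ := ht
  have hM0 : 0 ≤ M := (abs_nonneg _).trans (hM 0 (left_mem_Icc.2 zero_le_one))
  have hΓ3α := Gamma_pos_of_pos (by linarith : 0 < 3 - α)
  have hΓαβ := Gamma_pos_of_pos (by linarith : 0 < α - β)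
  have hΓ2β := Gamma_pos_of_pos (by linarith : 0 < 2 - β)
  set c := Gamma (2 - β) * t ^ (2 - α) / (Gamma (3 - α) * Gamma (α - β))
  have hc0 : 0 ≤ c := by have := rpow_nonneg ht0 (2 - α); positivity
  have hc1 : c ≤ Gamma (2 - β) / (Gamma (3 - α) * Gamma (α - β)) := by
    refine div_le_div_of_nonneg_right ?_ (by positivity)
    exact mul_le_of_le_one_right hΓ2β.le (rpow_le_one ht0 ht1 (by linarith))
  have hlocal : |(∫ s in (0 : ℝ)..t, F s) - ∫ s in (0 : ℝ)..t, F' s| ≤ M := by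
    have := abs_integral_mul_sub_le (K := fun _ => 1) ht0 intervalIntegrable_const
      (hF.mono (Icc_subset_Icc_right ht1)) (hF'.mono (Icc_subset_Icc_right ht1))
      fun s hs => hM s ⟨hs.1, hs.2.trans ht1⟩
    simp only [one_mul, abs_one, intervalIntegral.integral_const, sub_zero, smul_eq_mul,
      mul_one] at this
    exact this.trans (mul_le_of_le_one_left hM0 ht1)
  have hweighted : |(∫ s in (0 : ℝ)..1, (1 - s) ^ (α - β - 1) * F s)
      - ∫ s in (0 : ℝ)..1, (1 - s) ^ (α - β - 1) * F' s| ≤ 1 / (α - β) * M := by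
    have hp : -1 < α - β - 1 := by linarith
    have := abs_integral_mul_sub_le zero_le_one (intervalIntegrable_one_sub_rpow hp) hF hF' hM
    rwa [intervalIntegral.integral_congr (g := fun s => (1 - s) ^ (α - β - 1))
      fun s hs => abs_of_nonneg
        (rpow_nonneg (by rw [uIcc_of_le zero_le_one] at hs; linarith [hs.2]) _),
      integral_one_sub_rpow hp, sub_add_cancel] at this
  calc |T₂ α β F t - T₂ α β F' t|
      = |((∫ s in (0 : ℝ)..t, F s) - ∫ s in (0 : ℝ)..t, F' s)
          - c * ((∫ s in (0 : ℝ)..1, (1 - s) ^ (α - β - 1) * F s)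
            - ∫ s in (0 : ℝ)..1, (1 - s) ^ (α - β - 1) * F' s)| := by
        simp only [T₂, c]; ring_nf
    _ ≤ M + Gamma (2 - β) / (Gamma (3 - α) * Gamma (α - β)) * (1 / (α - β) * M) := by
        refine (abs_sub _ _).trans (add_le_add hlocal ?_)
        rw [abs_mul, abs_of_nonneg hc0]
        exact mul_le_mul hc1 hweighted (abs_nonneg _) (by positivity)
    _ = _ := by
        have hαβ : α - β ≠ 0 := (sub_pos.2 hβα).ne'
        rw [Gamma_add_one hαβ]
        field_simp

end Operators

/-- Contraction-type estimates for the operators `T₁` and `T₂` under a Lipschitz condition. -/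
theorem operator_lipschitz_bounds (α β ξ : ℝ) (hα : 1 < α ∧ α ≤ 2) (hβ : 0 < β ∧ β < 1)
    (hξ : 0 < ξ ∧ ξ < 1) (f : ℝ → ℝ → ℝ → ℝ)
    (hf : ContinuousOn (fun q : ℝ × ℝ × ℝ => f q.1 q.2.1 q.2.2)
        (Set.Icc (0 : ℝ) 1 ×ˢ (Set.univ : Set (ℝ × ℝ))))
    (k : ℝ) (hk : 0 < k)
    (hlip : ∀ t ∈ Set.Icc (0 : ℝ) 1, ∀ u v u' v' : ℝ,
        |f t u v - f t u' v'| ≤ k * (|u - u'| + |v - v'|))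
    (u v u' v' : ℝ → ℝ) (hu : ContinuousOn u (Set.Icc 0 1)) (hv : ContinuousOn v (Set.Icc 0 1))
    (hu' : ContinuousOn u' (Set.Icc 0 1)) (hv' : ContinuousOn v' (Set.Icc 0 1))
    (N : ℝ)
    (hN : N = max (sSup ((fun t => |u t - u' t|) '' Set.Icc 0 1))
        (sSup ((fun t => |v t - v' t|) '' Set.Icc 0 1)))
    (t : ℝ) (ht : t ∈ Set.Icc (0 : ℝ) 1) :
    |(∫ s in (0 : ℝ)..1, G α β ξ t s * f s (u s) (v s))
        - ∫ s in (0 : ℝ)..1, G α β ξ t s * f s (u' s) (v' s)| ≤ 2 * Gstar α β ξ * k * N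
      ∧ |((∫ s in (0 : ℝ)..t, f s (u s) (v s))
            - (Real.Gamma (2 - β) * t ^ (2 - α) / (Real.Gamma (3 - α) * Real.Gamma (α - β)))
                * (∫ s in (0 : ℝ)..1, (1 - s) ^ (α - β - 1) * f s (u s) (v s)))
          - ((∫ s in (0 : ℝ)..t, f s (u' s) (v' s))
            - (Real.Gamma (2 - β) * t ^ (2 - α) / (Real.Gamma (3 - α) * Real.Gamma (α - β)))
                * (∫ s in (0 : ℝ)..1, (1 - s) ^ (α - β - 1) * f s (u' s) (v' s)))|
        ≤ 2 * k * ((Real.Gamma (3 - α) * Real.Gamma (α - β + 1) + Real.Gamma (2 - β))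
            / (Real.Gamma (3 - α) * Real.Gamma (α - β + 1))) * N := by
  have huN : ∀ s ∈ Icc (0 : ℝ) 1, |u s - u' s| ≤ N := fun s hs => by
    rw [hN]; exact ((hu.sub hu').abs.le_sSup_image_Icc hs).trans (le_max_left _ _)
  have hvN : ∀ s ∈ Icc (0 : ℝ) 1, |v s - v' s| ≤ N := fun s hs => by
    rw [hN]; exact ((hv.sub hv').abs.le_sSup_image_Icc hs).trans (le_max_right _ _)
  have hD : ∀ s ∈ Icc (0 : ℝ) 1, |f s (u s) (v s) - f s (u' s) (v' s)| ≤ 2 * k * N :=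
    fun s hs => calc
      _ ≤ k * (|u s - u' s| + |v s - v' s|) := hlip s hs _ _ _ _
      _ ≤ k * (N + N) := by gcongr; exacts [huN s hs, hvN s hs]
      _ = 2 * k * N := by ring
  have hF := continuousOn_superposition hf hu hv
  have hF' := continuousOn_superposition hf hu' hv'
  exact ⟨(abs_T₁_sub_le hα.1.le (by linarith) (by linarith) hξ.1.le hξ.2 hF hF' hD ht).trans_eq
      (by ring),
    (abs_T₂_sub_le hα.2 (by linarith) hF hF' hD ht).trans_eq (by ring)⟩
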